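/- Unsoundness of the 1-extensional semantics: in the program P of Example 1 (with constructors 0/0, s/1 and rules g X → 0, h X → s 0, f → g, f → h, f' X → f X, fadd F G X → (F X) + (G X), fdouble F → fadd F F, plus the usual rules for + on naturals built from 0 and s), the expressions f and f' are 1-extensionally equivalent (⟦f⟧_{ext_1} = ⟦f'⟧_{ext_1}), yet Obs^P(fdouble f 0) ≠ Obs^P(fdouble f' 0); hence the extensional semantics ⟦·⟧_{ext_1} is unsound with respect to Obs (and with respect to Obs_FO). -/

import Mathlib

/-- A signature: function symbols and constructor symbols, each with an arity. -/
structure Sig where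
  FS : Type
  CS : Type
  arityF : FS → ℕ
  arityC : CS → ℕ

/-- Applicative partial expressions over a signature.  Variables are natural
numbers and `bot` is the distinguished 0-ary constructor `⊥`. -/
inductive Exp (σ : Sig) : Type where
  | var : ℕ → Exp σ
  | fn : σ.FS → Exp σ
  | cn : σ.CS → Exp σ
  | bot : Exp σ
  | app : Exp σ → Exp σ → Exp σ

variable {σ : Sig}

/-- `applyList e [e1, …, en]` is the curried application `e e1 … en`. -/
def applyList (e : Exp σ) (es : List (Exp σ)) : Exp σ := es.foldl Exp.app e

/-- Partial patterns `Pat_⊥`. -/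
inductive IsPPat : Exp σ → Prop where
  | var (x : ℕ) : IsPPat (Exp.var x)
  | bot : IsPPat (Exp.bot : Exp σ)
  | capp (c : σ.CS) (ts : List (Exp σ)) (har : ts.length ≤ σ.arityC c)
      (hts : ∀ t ∈ ts, IsPPat t) : IsPPat (applyList (Exp.cn c) ts)
  | fapp (f : σ.FS) (ts : List (Exp σ)) (har : ts.length < σ.arityF f)
      (hts : ∀ t ∈ ts, IsPPat t) : IsPPat (applyList (Exp.fn f) ts)

/-- The constructor `⊥` does not occur in the expression. -/
def BotFree : Exp σ → Prop
  | .bot => False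
  | .app a b => BotFree a ∧ BotFree b
  | _ => True

/-- Total patterns `Pat`. -/
def IsPat (t : Exp σ) : Prop := IsPPat t ∧ BotFree t

/-- First-order patterns `FOPat`. -/
inductive IsFOPat : Exp σ → Prop where
  | var (x : ℕ) : IsFOPat (Exp.var x)
  | capp (c : σ.CS) (ts : List (Exp σ)) (har : ts.length = σ.arityC c)
      (hts : ∀ t ∈ ts, IsFOPat t) : IsFOPat (applyList (Exp.cn c) ts)

/-- The list of occurrences of variables in an expression. -/
def occVars : Exp σ → List ℕ
  | .var x => [x]
  | .app a b => occVars a ++ occVars b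
  | _ => []

/-- Applying a substitution to an expression. -/
def subst (θ : ℕ → Exp σ) : Exp σ → Exp σ
  | .var x => θ x
  | .fn f => .fn f
  | .cn c => .cn c
  | .bot => .bot
  | .app a b => .app (subst θ a) (subst θ b)

/-- Partial-pattern substitutions `PSubst_⊥`. -/
def PSub (θ : ℕ → Exp σ) : Prop := ∀ x, IsPPat (θ x)

/-- A program rule `f t1 … tn → r` (the left-hand side is `f` applied to `lhs`). -/
structure Rule (σ : Sig) where
  fn : σ.FS
  lhs : List (Exp σ)
  rhs : Exp σ

/-- Well-formedness of a rule: `f` is applied to as many arguments as its arity,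
the arguments form a linear tuple of total patterns. -/
def Rule.WF (r : Rule σ) : Prop :=
  r.lhs.length = σ.arityF r.fn ∧ (∀ t ∈ r.lhs, IsPat t) ∧
    (r.lhs.flatMap occVars).Nodup

/-- The rule has no extra variables: all variables of the right-hand side occur
in the left-hand side. -/
def Rule.NoExtra (r : Rule σ) : Prop :=
  ∀ x ∈ occVars r.rhs, x ∈ r.lhs.flatMap occVars

abbrev Program (σ : Sig) := Set (Rule σ)

/-- A program without extra variables, all whose rules are well formed. -/
def WFProg (P : Program σ) : Prop := ∀ r ∈ P, r.WF ∧ r.NoExtra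

/-- `h ∈ Σ` (a function symbol, a constructor symbol, or `⊥`). -/
def IsSymb : Exp σ → Prop
  | .fn _ => True
  | .cn _ => True
  | .bot => True
  | _ => False

/-- HOCRWL derivation trees for statements `e ⇒ t`, with rules
(B), (RR), (DC) and (OR). -/
inductive DTree (P : Program σ) : Exp σ → Exp σ → Type where
  | bot (e : Exp σ) : DTree P e Exp.bot
  | rr (x : ℕ) : DTree P (Exp.var x) (Exp.var x)
  | dc (h : Exp σ) (es ts : List (Exp σ)) (hsym : IsSymb h)
      (hlen : es.length = ts.length) (hpat : IsPPat (applyList h ts))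
      (ds : ∀ p ∈ es.zip ts, DTree P p.1 p.2) :
      DTree P (applyList h es) (applyList h ts)
  | opr (r : Rule σ) (hr : r ∈ P) (θ : ℕ → Exp σ) (hθ : PSub θ)
      (es as : List (Exp σ)) (t : Exp σ) (hlen : es.length = r.lhs.length)
      (ds : ∀ p ∈ es.zip (r.lhs.map (subst θ)), DTree P p.1 p.2)
      (d : DTree P (applyList (subst θ r.rhs) as) t) :
      DTree P (applyList (Exp.fn r.fn) (es ++ as)) t

/-- `P ⊢ e ⇒ t` is derivable in the HOCRWL proof calculus. -/
def Deriv (P : Program σ) (e t : Exp σ) : Prop := Nonempty (DTree P e t)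

/-- The HOCRWL denotation `⟦e⟧^P = { t ∈ Pat_⊥ | P ⊢ e ⇒ t }`. -/
def den (P : Program σ) (e : Exp σ) : Set (Exp σ) := {t | IsPPat t ∧ Deriv P e t}

/-- Observations: total patterns in the denotation. -/
def Obs (P : Program σ) (e : Exp σ) : Set (Exp σ) := {t | t ∈ den P e ∧ BotFree t}

/-- First-order observations: first-order patterns in the denotation. -/
def ObsFO (P : Program σ) (e : Exp σ) : Set (Exp σ) := {t | t ∈ den P e ∧ IsFOPat t}

/-- Contexts `C ::= [ ] | C e | e C`. -/
inductive Cntxt (σ : Sig) : Type where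
  | hole : Cntxt σ
  | appL : Cntxt σ → Exp σ → Cntxt σ
  | appR : Exp σ → Cntxt σ → Cntxt σ

/-- Filling the hole of a context with an expression. -/
def Cntxt.fill : Cntxt σ → Exp σ → Exp σ
  | .hole, e => e
  | .appL C e', e => .app (C.fill e) e'
  | .appR e' C, e => .app e' (C.fill e)

/-- Function symbols occurring in an expression. -/
def expFS : Exp σ → Set σ.FS
  | .fn f => {f}
  | .app a b => expFS a ∪ expFS b
  | _ => ∅

/-- Function symbols occurring in a rule. -/
def ruleFS (r : Rule σ) : Set σ.FS :=
  insert r.fn ((⋃ t ∈ r.lhs, expFS t) ∪ expFS r.rhs)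

/-- Function symbols occurring in a program. -/
def progFS (P : Program σ) : Set σ.FS := ⋃ r ∈ P, ruleFS r

/-- Function symbols defined by a program (roots of left-hand sides). -/
def defs (P : Program σ) : Set σ.FS := Rule.fn '' P

/-- `P'` is a safe extension of `(P, e)`: `P' = P ⊎ P''` where `P''` defines no
function symbol occurring in `P` or in `e`. -/
def SafeExt (P P' : Program σ) (e : Exp σ) : Prop :=
  ∃ P'' : Program σ, P' = P ∪ P'' ∧ Disjoint P P'' ∧
    Disjoint (defs P'') (expFS e ∪ progFS P)

/-- `e ∼ₙ e'` : `n`-extensional equivalence. -/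
def ExtEquiv (P : Program σ) (n : ℕ) (e e' : Exp σ) : Prop :=
  ∀ es : List (Exp σ), es.length = n →
    den P (applyList e es) = den P (applyList e' es)

/-- Function symbols of the Example 1 program. -/
inductive Ex1F where | g | h | f | f' | fadd | fdouble | plus

/-- Constructor symbols of the Example 1 program: `0` and `s`. -/
inductive Ex1C where | zero | succ

/-- The signature of the Example 1 program. -/
def ex1Sig : Sig where
  FS := Ex1F
  CS := Ex1C
  arityF := fun s => match s with
    | .g => 1 | .h => 1 | .f => 0 | .f' => 1 | .fadd => 3 | .fdouble => 1
    | .plus => 2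
  arityC := fun s => match s with | .zero => 0 | .succ => 1

def zeroE : Exp ex1Sig := .cn .zero

def sE (e : Exp ex1Sig) : Exp ex1Sig := .app (.cn .succ) e

def plusE (a b : Exp ex1Sig) : Exp ex1Sig := .app (.app (.fn .plus) a) b

/-- The Example 1 program: `g X → 0`, `h X → s 0`, `f → g`, `f → h`,
`f' X → f X`, `fadd F G X → (F X) + (G X)`, `fdouble F → fadd F F`,
`0 + Y → Y`, `(s X) + Y → s (X + Y)`. -/
def ex1Prog : Program ex1Sig :=
  { ⟨.g, [.var 0], zeroE⟩,
    ⟨.h, [.var 0], sE zeroE⟩,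
    ⟨.f, [], .fn .g⟩,
    ⟨.f, [], .fn .h⟩,
    ⟨.f', [.var 0], .app (.fn .f) (.var 0)⟩,
    ⟨.fadd, [.var 0, .var 1, .var 2],
      plusE (.app (.var 0) (.var 2)) (.app (.var 1) (.var 2))⟩,
    ⟨.fdouble, [.var 0], .app (.app (.fn .fadd) (.var 0)) (.var 0)⟩,
    ⟨.plus, [zeroE, .var 1], .var 1⟩,
    ⟨.plus, [sE (.var 0), .var 1], sE (plusE (.var 0) (.var 1))⟩ }

/-- The expression `fdouble f 0`. -/
def fdouble_f_0 : Exp ex1Sig := .app (.app (.fn .fdouble) (.fn .f)) zeroE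

/-- The expression `fdouble f' 0`. -/
def fdouble_f'_0 : Exp ex1Sig := .app (.app (.fn .fdouble) (.fn .f')) zeroE

/-!
Call-time choice: `fdouble f 0` rewrites to `fadd p p 0` and then to `p 0 + p 0` for a
single value `p ∈ {⊥, g, h}` of `f`, shared by both summands, so each of its values
approximates `0 + 0` or `s 0 + s 0`, never `s 0`. The partial application `f'` is already a
pattern and is passed unevaluated, so the two copies of `f' 0` are evaluated independently, to
`0` and to `s 0`. Yet `f t` and `f' t` have the same values, the approximations of `0` and of
`s 0`, whatever `t` is.
-/

open List (Forall₂)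

namespace Exp

def head : Exp σ → Exp σ
  | app a _ => a.head
  | e => e

def args : Exp σ → List (Exp σ)
  | app a b => a.args ++ [b]
  | _ => []

end Exp

@[simp] theorem applyList_nil (e : Exp σ) : applyList e [] = e := rfl

@[simp] theorem applyList_cons (e a : Exp σ) (es : List (Exp σ)) :
    applyList e (a :: es) = applyList (.app e a) es := rfl

theorem head_applyList (e : Exp σ) (es : List (Exp σ)) : (applyList e es).head = e.head := by
  induction es generalizing e with
  | nil => rfl
  | cons a es ih => rw [applyList_cons, ih]; rfl

theorem args_applyList (e : Exp σ) (es : List (Exp σ)) :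
    (applyList e es).args = e.args ++ es := by
  induction es generalizing e with
  | nil => simp
  | cons a es ih => simp [ih, Exp.args]

theorem IsSymb.head_eq {h : Exp σ} (hh : IsSymb h) : h.head = h := by
  cases h <;> first | rfl | exact hh.elim

theorem IsSymb.args_eq {h : Exp σ} (hh : IsSymb h) : h.args = [] := by
  cases h <;> first | rfl | exact hh.elim

theorem isSymb_fn (f : σ.FS) : IsSymb (Exp.fn f) := trivial

theorem isSymb_cn (c : σ.CS) : IsSymb (Exp.cn c) := trivial

theorem isSymb_bot : IsSymb (Exp.bot : Exp σ) := trivial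

theorem applyList_inj {h h' : Exp σ} {es es' : List (Exp σ)} (hh : IsSymb h) (hh' : IsSymb h')
    (he : applyList h es = applyList h' es') : h = h' ∧ es = es' := by
  have hhead := congrArg Exp.head he
  have hargs := congrArg Exp.args he
  simp only [head_applyList, args_applyList, hh.head_eq, hh'.head_eq, hh.args_eq,
    hh'.args_eq, List.nil_append] at hhead hargs
  exact ⟨hhead, hargs⟩

theorem applyList_ne_var {h : Exp σ} (hh : IsSymb h) (es : List (Exp σ)) (x : ℕ) :
    applyList h es ≠ .var x := fun he => by
  have hhead := congrArg Exp.head he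
  rw [head_applyList, hh.head_eq] at hhead
  rw [hhead] at hh
  exact hh

theorem IsPPat.length_lt_arityF {f : σ.FS} {ts : List (Exp σ)}
    (h : IsPPat (applyList (.fn f) ts)) : ts.length < σ.arityF f := by
  generalize he : applyList (.fn f) ts = e at h
  cases h with
  | var x => exact absurd he (applyList_ne_var (isSymb_fn f) ts x)
  | bot => cases (applyList_inj (es' := []) (isSymb_fn f) isSymb_bot he).1
  | capp c ts' => cases (applyList_inj (isSymb_fn f) (isSymb_cn c) he).1
  | fapp f' ts' har =>
    obtain ⟨hf, rfl⟩ := applyList_inj (isSymb_fn f) (isSymb_fn f') he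
    cases hf
    exact har

theorem IsPPat.eq_nil_of_bot {ts : List (Exp σ)} (h : IsPPat (applyList .bot ts)) : ts = [] := by
  generalize he : applyList .bot ts = e at h
  cases h with
  | var x => exact absurd he (applyList_ne_var isSymb_bot ts x)
  | bot => exact (applyList_inj (es' := []) isSymb_bot isSymb_bot he).2
  | capp c ts' => cases (applyList_inj isSymb_bot (isSymb_cn c) he).1
  | fapp f' ts' => cases (applyList_inj isSymb_bot (isSymb_fn f') he).1

section Deriv

variable {P : Program σ}

theorem Deriv.bot (e : Exp σ) : Deriv P e .bot := ⟨.bot e⟩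

theorem Deriv.dc {h : Exp σ} {es ts : List (Exp σ)} (hh : IsSymb h)
    (hpat : IsPPat (applyList h ts)) (hargs : Forall₂ (Deriv P) es ts) :
    Deriv P (applyList h es) (applyList h ts) := by
  obtain ⟨hlen, hzip⟩ := List.forall₂_iff_zip.1 hargs
  exact ⟨.dc h es ts hh hlen hpat fun p hp => Classical.choice (hzip hp)⟩

theorem Deriv.rule {r : Rule σ} {θ : ℕ → Exp σ} {es as : List (Exp σ)} {t : Exp σ}
    (hr : r ∈ P) (hθ : PSub θ) (hargs : Forall₂ (Deriv P) es (r.lhs.map (subst θ)))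
    (hbody : Deriv P (applyList (subst θ r.rhs) as) t) :
    Deriv P (applyList (.fn r.fn) (es ++ as)) t := by
  obtain ⟨hlen, hzip⟩ := List.forall₂_iff_zip.1 hargs
  exact ⟨.opr r hr θ hθ es as t (by simpa using hlen) (fun p hp => Classical.choice (hzip hp))
    hbody.some⟩

theorem Deriv.refl {t : Exp σ} (ht : IsPPat t) : Deriv P t t := by
  induction ht with
  | var x => exact ⟨.rr x⟩
  | bot => exact .bot _
  | capp c ts har hts ih => exact .dc (isSymb_cn c) (.capp c ts har hts) (List.forall₂_same.2 ih)
  | fapp f ts har hts ih => exact .dc (isSymb_fn f) (.fapp f ts har hts) (List.forall₂_same.2 ih)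

theorem Deriv.cases {e t : Exp σ} (h : Deriv P e t) :
    t = .bot ∨ (∃ x, e = .var x ∧ t = .var x) ∨
    (∃ h es ts, IsSymb h ∧ e = applyList h es ∧ t = applyList h ts ∧ IsPPat t ∧
      Forall₂ (Deriv P) es ts) ∨
    ∃ r ∈ P, ∃ θ, PSub θ ∧ ∃ es as, e = applyList (.fn r.fn) (es ++ as) ∧
      Forall₂ (Deriv P) es (r.lhs.map (subst θ)) ∧
      Deriv P (applyList (subst θ r.rhs) as) t := by
  obtain ⟨d⟩ := h
  cases d with
  | bot => exact .inl rfl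
  | rr x => exact .inr (.inl ⟨x, rfl, rfl⟩)
  | dc h es ts hh hlen hpat ds =>
    exact .inr (.inr (.inl ⟨h, es, ts, hh, rfl, rfl, hpat,
      List.forall₂_iff_zip.2 ⟨hlen, fun hp => ⟨ds _ hp⟩⟩⟩))
  | opr r hr θ hθ es as t hlen ds d =>
    exact .inr (.inr (.inr ⟨r, hr, θ, hθ, es, as, rfl,
      List.forall₂_iff_zip.2 ⟨by simpa using hlen, fun hp => ⟨ds _ hp⟩⟩, ⟨d⟩⟩))

theorem deriv_applyList_bot {es : List (Exp σ)} {t : Exp σ} (h : Deriv P (applyList .bot es) t) :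
    t = .bot := by
  rcases h.cases with rfl | ⟨x, he, -⟩ | ⟨h, es', ts, hh, he, rfl, hpat, -⟩ |
    ⟨r, -, θ, -, es', as, he, -⟩
  · rfl
  · exact absurd he (applyList_ne_var isSymb_bot es x)
  · obtain ⟨rfl, -⟩ := applyList_inj isSymb_bot hh he
    rw [hpat.eq_nil_of_bot, applyList_nil]
  · cases (applyList_inj isSymb_bot (isSymb_fn r.fn) he).1

theorem deriv_applyList_cn {c : σ.CS} {es : List (Exp σ)} {t : Exp σ}
    (h : Deriv P (applyList (.cn c) es) t) :
    t = .bot ∨ ∃ ts, t = applyList (.cn c) ts ∧ Forall₂ (Deriv P) es ts := by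
  rcases h.cases with rfl | ⟨x, he, -⟩ | ⟨h, es', ts, hh, he, rfl, -, hargs⟩ |
    ⟨r, -, θ, -, es', as, he, -⟩
  · exact .inl rfl
  · exact absurd he (applyList_ne_var (isSymb_cn c) es x)
  · obtain ⟨rfl, rfl⟩ := applyList_inj (isSymb_cn c) hh he
    exact .inr ⟨ts, rfl, hargs⟩
  · cases (applyList_inj (isSymb_cn c) (isSymb_fn r.fn) he).1

theorem deriv_applyList_fn {f : σ.FS} {es : List (Exp σ)} {t : Exp σ}
    (h : Deriv P (applyList (.fn f) es) t) :
    t = .bot ∨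
    (es.length < σ.arityF f ∧ ∃ ts, t = applyList (.fn f) ts ∧ Forall₂ (Deriv P) es ts) ∨
    ∃ r ∈ P, r.fn = f ∧ ∃ θ, PSub θ ∧
      Forall₂ (Deriv P) (es.take r.lhs.length) (r.lhs.map (subst θ)) ∧
      Deriv P (applyList (subst θ r.rhs) (es.drop r.lhs.length)) t := by
  rcases h.cases with rfl | ⟨x, he, -⟩ | ⟨h, es', ts, hh, he, rfl, hpat, hargs⟩ |
    ⟨r, hr, θ, hθ, es', as, he, hargs, hbody⟩
  · exact .inl rfl
  · exact absurd he (applyList_ne_var (isSymb_fn f) es x)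
  · obtain ⟨rfl, rfl⟩ := applyList_inj (isSymb_fn f) hh he
    exact .inr (.inl ⟨hargs.length_eq ▸ hpat.length_lt_arityF, ts, rfl, hargs⟩)
  · obtain ⟨hf, rfl⟩ := applyList_inj (isSymb_fn f) (isSymb_fn r.fn) he
    cases hf
    have hlen : es'.length = r.lhs.length := by simpa using hargs.length_eq
    refine .inr (.inr ⟨r, hr, rfl, θ, hθ, ?_, ?_⟩)
    · rwa [List.take_left' hlen]
    · rwa [List.drop_left' hlen]

theorem deriv_applyList_fn_of_arityF_le {f : σ.FS} {es : List (Exp σ)} {t : Exp σ}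
    (har : σ.arityF f ≤ es.length) (h : Deriv P (applyList (.fn f) es) t) :
    t = .bot ∨ ∃ r ∈ P, r.fn = f ∧ ∃ θ, PSub θ ∧
      Forall₂ (Deriv P) (es.take r.lhs.length) (r.lhs.map (subst θ)) ∧
      Deriv P (applyList (subst θ r.rhs) (es.drop r.lhs.length)) t := by
  rcases deriv_applyList_fn h with ht | ⟨hlt, -⟩ | hrule
  · exact .inl ht
  · exact absurd har (not_le.2 hlt)
  · exact .inr hrule

theorem deriv_fn_of_forall_lhs_ne_nil {f : σ.FS} {t : Exp σ}
    (hP : ∀ r ∈ P, r.fn = f → r.lhs ≠ []) (h : Deriv P (.fn f) t) :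
    t = .bot ∨ t = .fn f := by
  rcases deriv_applyList_fn (es := []) h with
    ht | ⟨-, ts, rfl, hargs⟩ | ⟨r, hr, hf, θ, -, hargs, -⟩
  · exact .inl ht
  · rw [List.forall₂_nil_left_iff.1 hargs]
    exact .inr rfl
  · simp only [List.take_nil, List.forall₂_nil_left_iff, List.map_eq_nil_iff] at hargs
    exact absurd hargs (hP r hr hf)

end Deriv

namespace Ex1

def numeral : ℕ → Exp ex1Sig
  | 0 => zeroE
  | n + 1 => sE (numeral n)

/-- `t ⊑ sⁿ 0` in the approximation order of partial patterns. -/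
inductive ApproxNumeral : Exp ex1Sig → ℕ → Prop
  | bot (n : ℕ) : ApproxNumeral .bot n
  | zero : ApproxNumeral zeroE 0
  | succ {t : Exp ex1Sig} {n : ℕ} : ApproxNumeral t n → ApproxNumeral (sE t) (n + 1)

theorem ApproxNumeral.isPPat {t : Exp ex1Sig} {n : ℕ} (h : ApproxNumeral t n) : IsPPat t := by
  induction h with
  | bot => exact .bot
  | zero => exact .capp (σ := ex1Sig) Ex1C.zero [] le_rfl (by simp)
  | succ _ ih => exact .capp (σ := ex1Sig) Ex1C.succ [_] le_rfl (by simpa using ih)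

theorem approxNumeral_numeral (n : ℕ) : ApproxNumeral (numeral n) n := by
  induction n with
  | zero => exact .zero
  | succ n ih => exact .succ ih

theorem ApproxNumeral.eq_of_numeral {m n : ℕ} (h : ApproxNumeral (numeral m) n) : m = n := by
  induction m generalizing n with
  | zero => cases h; rfl
  | succ m ih => cases h with | succ h => rw [ih h]

theorem deriv_zeroE {t : Exp ex1Sig} (h : Deriv ex1Prog zeroE t) : t = .bot ∨ t = zeroE := by
  rcases deriv_applyList_cn (es := []) h with rfl | ⟨ts, rfl, hargs⟩
  · exact .inl rfl
  · rw [List.forall₂_nil_left_iff.1 hargs]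
    exact .inr rfl

theorem deriv_sE {e t : Exp ex1Sig} (h : Deriv ex1Prog (sE e) t) :
    t = .bot ∨ ∃ t', t = sE t' ∧ Deriv ex1Prog e t' := by
  rcases deriv_applyList_cn (es := [e]) h with rfl | ⟨ts, rfl, hargs⟩
  · exact .inl rfl
  · obtain ⟨t', ts, ht', hts, rfl⟩ := List.forall₂_cons_left_iff.1 hargs
    rw [List.forall₂_nil_left_iff.1 hts]
    exact .inr ⟨t', rfl, ht'⟩

theorem ApproxNumeral.deriv {p t : Exp ex1Sig} {n : ℕ} (hp : ApproxNumeral p n)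
    (h : Deriv ex1Prog p t) : ApproxNumeral t n := by
  induction hp generalizing t with
  | bot => rw [deriv_applyList_bot (es := []) h]; exact .bot _
  | zero => rcases deriv_zeroE h with rfl | rfl <;> constructor
  | succ _ ih =>
    rcases deriv_sE h with rfl | ⟨t', rfl, ht'⟩
    · exact .bot _
    · exact .succ (ih ht')

theorem ApproxNumeral.deriv_numeral {t : Exp ex1Sig} {n : ℕ} (h : ApproxNumeral t n) :
    Deriv ex1Prog (numeral n) t := by
  induction h with
  | bot => exact .bot _
  | zero => exact .refl (approxNumeral_numeral 0).isPPat
  | succ h ih => exact .dc (es := [_]) (ts := [_]) (isSymb_cn _) h.succ.isPPat (.cons ih .nil)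

theorem deriv_numeral_iff {n : ℕ} {t : Exp ex1Sig} :
    Deriv ex1Prog (numeral n) t ↔ ApproxNumeral t n :=
  ⟨(approxNumeral_numeral n).deriv, ApproxNumeral.deriv_numeral⟩

theorem mem_ex1Prog {r : Rule ex1Sig} (hr : r ∈ ex1Prog) :
    r = ⟨.g, [.var 0], zeroE⟩ ∨ r = ⟨.h, [.var 0], sE zeroE⟩ ∨
    r = ⟨.f, [], .fn .g⟩ ∨ r = ⟨.f, [], .fn .h⟩ ∨
    r = ⟨.f', [.var 0], .app (.fn .f) (.var 0)⟩ ∨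
    r = ⟨.fadd, [.var 0, .var 1, .var 2],
      plusE (.app (.var 0) (.var 2)) (.app (.var 1) (.var 2))⟩ ∨
    r = ⟨.fdouble, [.var 0], .app (.app (.fn .fadd) (.var 0)) (.var 0)⟩ ∨
    r = ⟨.plus, [zeroE, .var 1], .var 1⟩ ∨
    r = ⟨.plus, [sE (.var 0), .var 1], sE (plusE (.var 0) (.var 1))⟩ := by
  simpa only [ex1Prog, Set.mem_insert_iff, Set.mem_singleton_iff] using hr

theorem deriv_app_g_iff {e t : Exp ex1Sig} :
    Deriv ex1Prog (.app (.fn .g) e) t ↔ ApproxNumeral t 0 := by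
  constructor
  · intro h
    rcases deriv_applyList_fn_of_arityF_le (es := [e]) le_rfl h with
      rfl | ⟨r, hr, hf, θ, -, -, hbody⟩
    · exact .bot 0
    rcases mem_ex1Prog hr with rfl | rfl | rfl | rfl | rfl | rfl | rfl | rfl | rfl <;> cases hf
    exact deriv_numeral_iff.1 hbody
  · intro h
    exact Deriv.rule (r := (⟨.g, [.var 0], zeroE⟩ : Rule ex1Sig)) (es := [e]) (as := [])
      (θ := fun _ => .bot) (by simp [ex1Prog]) (fun _ => .bot) (.cons (.bot e) .nil)
      (deriv_numeral_iff (n := 0) |>.2 h)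

theorem deriv_app_h_iff {e t : Exp ex1Sig} :
    Deriv ex1Prog (.app (.fn .h) e) t ↔ ApproxNumeral t 1 := by
  constructor
  · intro h
    rcases deriv_applyList_fn_of_arityF_le (es := [e]) le_rfl h with
      rfl | ⟨r, hr, hf, θ, -, -, hbody⟩
    · exact .bot 1
    rcases mem_ex1Prog hr with rfl | rfl | rfl | rfl | rfl | rfl | rfl | rfl | rfl <;> cases hf
    exact deriv_numeral_iff.1 hbody
  · intro h
    exact Deriv.rule (r := (⟨.h, [.var 0], sE zeroE⟩ : Rule ex1Sig)) (es := [e]) (as := [])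
      (θ := fun _ => .bot) (by simp [ex1Prog]) (fun _ => .bot) (.cons (.bot e) .nil)
      (deriv_numeral_iff (n := 1) |>.2 h)

theorem deriv_app_f_iff {e t : Exp ex1Sig} :
    Deriv ex1Prog (.app (.fn .f) e) t ↔ ApproxNumeral t 0 ∨ ApproxNumeral t 1 := by
  constructor
  · intro h
    rcases deriv_applyList_fn_of_arityF_le (es := [e]) (Nat.zero_le _) h with
      rfl | ⟨r, hr, hf, θ, -, -, hbody⟩
    · exact .inl (.bot 0)
    rcases mem_ex1Prog hr with rfl | rfl | rfl | rfl | rfl | rfl | rfl | rfl | rfl <;> cases hf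
    · exact .inl (deriv_app_g_iff.1 hbody)
    · exact .inr (deriv_app_h_iff.1 hbody)
  · rintro (h | h)
    · exact Deriv.rule (r := (⟨.f, [], .fn .g⟩ : Rule ex1Sig)) (es := []) (as := [e])
        (θ := fun _ => .bot) (by simp [ex1Prog]) (fun _ => .bot) .nil (deriv_app_g_iff.2 h)
    · exact Deriv.rule (r := (⟨.f, [], .fn .h⟩ : Rule ex1Sig)) (es := []) (as := [e])
        (θ := fun _ => .bot) (by simp [ex1Prog]) (fun _ => .bot) .nil (deriv_app_h_iff.2 h)

theorem deriv_app_f'_iff {e t : Exp ex1Sig} :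
    Deriv ex1Prog (.app (.fn .f') e) t ↔ ApproxNumeral t 0 ∨ ApproxNumeral t 1 := by
  constructor
  · intro h
    rcases deriv_applyList_fn_of_arityF_le (es := [e]) le_rfl h with
      rfl | ⟨r, hr, hf, θ, -, -, hbody⟩
    · exact .inl (.bot 0)
    rcases mem_ex1Prog hr with rfl | rfl | rfl | rfl | rfl | rfl | rfl | rfl | rfl <;> cases hf
    exact deriv_app_f_iff.1 hbody
  · intro h
    exact Deriv.rule (r := (⟨.f', [.var 0], .app (.fn .f) (.var 0)⟩ : Rule ex1Sig))
      (es := [e]) (as := []) (θ := fun _ => .bot) (by simp [ex1Prog]) (fun _ => .bot)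
      (.cons (.bot e) .nil) (deriv_app_f_iff.2 h)

theorem den_app_f_eq_den_app_f' (e : Exp ex1Sig) :
    den ex1Prog (.app (.fn .f) e) = den ex1Prog (.app (.fn .f') e) :=
  Set.ext fun _ => and_congr_right' (deriv_app_f_iff.trans deriv_app_f'_iff.symm)

theorem deriv_plusE {a b t : Exp ex1Sig} (h : Deriv ex1Prog (plusE a b) t) :
    t = .bot ∨ (∃ y, Deriv ex1Prog a zeroE ∧ Deriv ex1Prog b y ∧ Deriv ex1Prog y t) ∨
    ∃ x y, Deriv ex1Prog a (sE x) ∧ Deriv ex1Prog b y ∧ Deriv ex1Prog (sE (plusE x y)) t := by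
  rcases deriv_applyList_fn_of_arityF_le (es := [a, b]) le_rfl h with
    rfl | ⟨r, hr, hf, θ, -, hargs, hbody⟩
  · exact .inl rfl
  rcases mem_ex1Prog hr with rfl | rfl | rfl | rfl | rfl | rfl | rfl | rfl | rfl <;> cases hf
  · obtain _ | ⟨ha, _ | ⟨hb, -⟩⟩ := hargs
    exact .inr (.inl ⟨θ 1, ha, hb, hbody⟩)
  · obtain _ | ⟨ha, _ | ⟨hb, -⟩⟩ := hargs
    exact .inr (.inr ⟨θ 0, θ 1, ha, hb, hbody⟩)

def ValuesApprox (e : Exp ex1Sig) (n : ℕ) : Prop := ∀ t, Deriv ex1Prog e t → ApproxNumeral t n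

theorem ValuesApprox.plusE {a b : Exp ex1Sig} {m n : ℕ} (ha : ValuesApprox a m)
    (hb : ValuesApprox b n) : ValuesApprox (plusE a b) (m + n) := by
  induction m generalizing a b with
  | zero =>
    intro t ht
    rcases deriv_plusE ht with rfl | ⟨y, -, hy, hyt⟩ | ⟨x, y, hx, -, -⟩
    · exact .bot _
    · simpa using (hb y hy).deriv hyt
    · nomatch ha _ hx
  | succ m ih =>
    intro t ht
    rcases deriv_plusE ht with rfl | ⟨y, h0, -, -⟩ | ⟨x, y, hx, hy, hxyt⟩
    · exact .bot _
    · nomatch ha _ h0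
    · obtain _ | _ | hx' := ha _ hx
      rcases deriv_sE hxyt with rfl | ⟨t', rfl, ht'⟩
      · exact .bot _
      · rw [Nat.succ_add]
        exact .succ (ih (fun _ => hx'.deriv) (fun _ => (hb y hy).deriv) t' ht')

theorem deriv_fadd {a b u t : Exp ex1Sig}
    (h : Deriv ex1Prog (applyList (.fn .fadd) [a, b, u]) t) :
    t = .bot ∨ ∃ a' b' u', Deriv ex1Prog a a' ∧ Deriv ex1Prog b b' ∧ Deriv ex1Prog u u' ∧
      Deriv ex1Prog (plusE (.app a' u') (.app b' u')) t := by
  rcases deriv_applyList_fn_of_arityF_le (es := [a, b, u]) le_rfl h with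
    rfl | ⟨r, hr, hf, θ, -, hargs, hbody⟩
  · exact .inl rfl
  rcases mem_ex1Prog hr with rfl | rfl | rfl | rfl | rfl | rfl | rfl | rfl | rfl <;> cases hf
  obtain _ | ⟨ha, _ | ⟨hb, _ | ⟨hu, -⟩⟩⟩ := hargs
  exact .inr ⟨θ 0, θ 1, θ 2, ha, hb, hu, hbody⟩

theorem deriv_fdouble {a u t : Exp ex1Sig}
    (h : Deriv ex1Prog (applyList (.fn .fdouble) [a, u]) t) :
    t = .bot ∨ ∃ p, Deriv ex1Prog a p ∧
      Deriv ex1Prog (applyList (.fn .fadd) [p, p, u]) t := by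
  rcases deriv_applyList_fn_of_arityF_le (es := [a, u]) (by exact Nat.le_succ 1) h with
    rfl | ⟨r, hr, hf, θ, -, hargs, hbody⟩
  · exact .inl rfl
  rcases mem_ex1Prog hr with rfl | rfl | rfl | rfl | rfl | rfl | rfl | rfl | rfl <;> cases hf
  obtain _ | ⟨ha, -⟩ := hargs
  exact .inr ⟨θ 0, ha, hbody⟩

theorem deriv_fn_g {t : Exp ex1Sig} (h : Deriv ex1Prog (.fn .g) t) : t = .bot ∨ t = .fn .g := by
  refine deriv_fn_of_forall_lhs_ne_nil (fun r hr hf => ?_) h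
  rcases mem_ex1Prog hr with rfl | rfl | rfl | rfl | rfl | rfl | rfl | rfl | rfl <;> cases hf
  simp

theorem deriv_fn_h {t : Exp ex1Sig} (h : Deriv ex1Prog (.fn .h) t) : t = .bot ∨ t = .fn .h := by
  refine deriv_fn_of_forall_lhs_ne_nil (fun r hr hf => ?_) h
  rcases mem_ex1Prog hr with rfl | rfl | rfl | rfl | rfl | rfl | rfl | rfl | rfl <;> cases hf
  simp

theorem deriv_fn_f {t : Exp ex1Sig} (h : Deriv ex1Prog (.fn .f) t) :
    t = .bot ∨ t = .fn .g ∨ t = .fn .h := by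
  rcases deriv_applyList_fn_of_arityF_le (es := []) le_rfl h with
    rfl | ⟨r, hr, hf, θ, -, -, hbody⟩
  · exact .inl rfl
  rcases mem_ex1Prog hr with rfl | rfl | rfl | rfl | rfl | rfl | rfl | rfl | rfl <;> cases hf
  · rcases deriv_fn_g hbody with rfl | rfl
    exacts [.inl rfl, .inr (.inl rfl)]
  · rcases deriv_fn_h hbody with rfl | rfl
    exacts [.inl rfl, .inr (.inr rfl)]

theorem valuesApprox_app_bot (u : Exp ex1Sig) (n : ℕ) : ValuesApprox (.app .bot u) n :=
  fun _ h => deriv_applyList_bot (es := [u]) h ▸ .bot n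

theorem exists_valuesApprox_of_deriv_fn_f {p : Exp ex1Sig} (hp : Deriv ex1Prog (.fn .f) p) :
    ∃ k, ∀ q u, Deriv ex1Prog p q → ValuesApprox (.app q u) k := by
  rcases deriv_fn_f hp with rfl | rfl | rfl
  · refine ⟨0, fun q u hq => ?_⟩
    rw [deriv_applyList_bot (es := []) hq]
    exact valuesApprox_app_bot u 0
  · refine ⟨0, fun q u hq => ?_⟩
    rcases deriv_fn_g hq with rfl | rfl
    exacts [valuesApprox_app_bot u 0, fun _ => deriv_app_g_iff.1]
  · refine ⟨1, fun q u hq => ?_⟩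
    rcases deriv_fn_h hq with rfl | rfl
    exacts [valuesApprox_app_bot u 1, fun _ => deriv_app_h_iff.1]

theorem deriv_fdouble_f_zero {t : Exp ex1Sig} (h : Deriv ex1Prog fdouble_f_0 t) :
    ∃ k, ApproxNumeral t (k + k) := by
  rcases deriv_fdouble h with rfl | ⟨p, hp, hadd⟩
  · exact ⟨0, .bot 0⟩
  rcases deriv_fadd hadd with rfl | ⟨a, b, u, ha, hb, -, hplus⟩
  · exact ⟨0, .bot 0⟩
  obtain ⟨k, hk⟩ := exists_valuesApprox_of_deriv_fn_f hp
  exact ⟨k, (hk a u ha).plusE (hk b u hb) t hplus⟩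

theorem botFree_numeral (n : ℕ) : BotFree (numeral n) := by
  induction n with
  | zero => trivial
  | succ n ih => exact ⟨trivial, ih⟩

theorem isFOPat_numeral (n : ℕ) : IsFOPat (numeral n) := by
  induction n with
  | zero => exact .capp (σ := ex1Sig) Ex1C.zero [] rfl (by simp)
  | succ n ih => exact .capp (σ := ex1Sig) Ex1C.succ [_] rfl (by simpa using ih)

theorem deriv_fdouble_f'_zero : Deriv ex1Prog fdouble_f'_0 (numeral 1) := by
  have hf' : IsPPat (.fn .f' : Exp ex1Sig) :=
    .fapp (σ := ex1Sig) Ex1F.f' [] Nat.zero_lt_one (by simp)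
  have h0 : Deriv ex1Prog (.app (.fn .f') zeroE) (numeral 0) :=
    deriv_app_f'_iff.2 (.inl (approxNumeral_numeral 0))
  have h1 : Deriv ex1Prog (.app (.fn .f') zeroE) (numeral 1) :=
    deriv_app_f'_iff.2 (.inr (approxNumeral_numeral 1))
  have hplus : Deriv ex1Prog (plusE (.app (.fn .f') zeroE) (.app (.fn .f') zeroE)) (numeral 1) :=
    Deriv.rule (r := (⟨.plus, [zeroE, .var 1], .var 1⟩ : Rule ex1Sig)) (es := [_, _]) (as := [])
      (θ := fun _ => numeral 1) (by simp [ex1Prog]) (fun _ => (approxNumeral_numeral 1).isPPat)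
      (.cons h0 (.cons h1 .nil)) (.refl (approxNumeral_numeral 1).isPPat)
  have hadd : Deriv ex1Prog (applyList (.fn .fadd) [.fn .f', .fn .f', zeroE]) (numeral 1) :=
    Deriv.rule (r := (⟨.fadd, [.var 0, .var 1, .var 2],
        plusE (.app (.var 0) (.var 2)) (.app (.var 1) (.var 2))⟩ : Rule ex1Sig))
      (es := [_, _, _]) (as := []) (θ := fun i => if i < 2 then .fn .f' else numeral 0)
      (by simp [ex1Prog])
      (fun i => by dsimp only; split_ifs; exacts [hf', (approxNumeral_numeral 0).isPPat])
      (.cons (.refl hf') (.cons (.refl hf') (.cons (.refl (approxNumeral_numeral 0).isPPat) .nil)))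
      hplus
  exact Deriv.rule
    (r := (⟨.fdouble, [.var 0], .app (.app (.fn .fadd) (.var 0)) (.var 0)⟩ : Rule ex1Sig))
    (es := [_]) (as := [zeroE]) (θ := fun _ => .fn .f') (by simp [ex1Prog]) (fun _ => hf')
    (.cons (.refl hf') .nil) hadd

end Ex1

open Ex1

/-- **Proposition 2 (unsoundness of the 1-extensional semantics)**: in the
Example 1 program, `f` and `f'` are 1-extensionally equivalent
(`⟦f⟧_{ext_1} = ⟦f'⟧_{ext_1}`, i.e. `⟦f t⟧ = ⟦f' t⟧` for every partial pattern
`t`), yet `Obs(fdouble f 0) ≠ Obs(fdouble f' 0)` and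
`Obs_FO(fdouble f 0) ≠ Obs_FO(fdouble f' 0)`. -/
theorem ext1_unsound :
    (∀ t : Exp ex1Sig, IsPPat t →
      den ex1Prog (.app (.fn .f) t) = den ex1Prog (.app (.fn .f') t)) ∧
    Obs ex1Prog fdouble_f_0 ≠ Obs ex1Prog fdouble_f'_0 ∧
    ObsFO ex1Prog fdouble_f_0 ≠ ObsFO ex1Prog fdouble_f'_0 := by
  have hpos : numeral 1 ∈ den ex1Prog fdouble_f'_0 :=
    ⟨(approxNumeral_numeral 1).isPPat, deriv_fdouble_f'_zero⟩
  have hneg : numeral 1 ∉ den ex1Prog fdouble_f_0 := fun ⟨_, h⟩ => by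
    obtain ⟨k, hk⟩ := deriv_fdouble_f_zero h
    have := hk.eq_of_numeral
    omega
  refine ⟨fun t _ => den_app_f_eq_den_app_f' t, fun h => hneg ?_, fun h => hneg ?_⟩
  · exact (h ▸ ⟨hpos, botFree_numeral 1⟩ : numeral 1 ∈ Obs ex1Prog fdouble_f_0).1
  · exact (h ▸ ⟨hpos, isFOPat_numeral 1⟩ : numeral 1 ∈ ObsFO ex1Prog fdouble_f_0).1
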